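/- arXiv:2101.09790 — 5 statements merged into one kernel-verified Lean document; each statement's English description precedes it below -/
import Mathlib

section
/- For any K-dimensional positive definite Hermitian complex matrix O, letting O₁ be the diagonal matrix consisting of the diagonal entries of O, the trace of O₁⁻¹ is at most the trace of O⁻¹. -/
/-!
Each diagonal entry satisfies `(A i i)⁻¹ ≤ (A⁻¹) i i`: the Cauchy–Schwarz inequality for the inner
product `⟪x, y⟫ = xᴴ A y`, applied to `x = eᵢ` and `y = A⁻¹ eᵢ`, gives
`1 = |⟪x, y⟫|² ≤ ⟪x, x⟫ ⟪y, y⟫ = A i i * (A⁻¹) i i`. Summing over `i` compares the traces.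
-/

open scoped ComplexOrder

namespace Matrix

theorem inv_diagonal_of_ne_zero {n α : Type*} [Fintype n] [DecidableEq n] [Field α] {v : n → α}
    (hv : ∀ i, v i ≠ 0) : (diagonal v)⁻¹ = diagonal v⁻¹ := by
  refine inv_eq_left_inv ?_
  rw [diagonal_mul_diagonal, ← diagonal_one]
  exact congrArg diagonal (funext fun i => inv_mul_cancel₀ (hv i))

variable {n 𝕜 : Type*} [Fintype n] [RCLike 𝕜] {A : Matrix n n 𝕜}

theorem PosSemidef.inner_mul_inner_self_le (hA : A.PosSemidef) (x y : n → 𝕜) :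
    ‖star x ⬝ᵥ A *ᵥ y‖ * ‖star y ⬝ᵥ A *ᵥ x‖ ≤
      RCLike.re (star x ⬝ᵥ A *ᵥ x) * RCLike.re (star y ⬝ᵥ A *ᵥ y) := by
  let := A.toSeminormedAddCommGroup hA
  let := A.toInnerProductSpace hA
  simp only [dotProduct_comm (star _)]
  exact _root_.inner_mul_inner_self_le x y

variable [DecidableEq n]

theorem PosDef.one_le_re_diag_mul_re_inv_diag (hA : A.PosDef) (i : n) :
    1 ≤ RCLike.re (A i i) * RCLike.re (A⁻¹ i i) := by
  have hdet := A.isUnit_iff_isUnit_det.mp hA.isUnit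
  set e : n → 𝕜 := Pi.single i 1
  have he : star e = e := by rw [← Pi.single_star, star_one]
  have hdiag (M : Matrix n n 𝕜) : star e ⬝ᵥ M *ᵥ e = M i i := by
    rw [he, mulVec_single_one, single_one_dotProduct, col_apply]
  have hinv : star (A⁻¹ *ᵥ e) = star e ᵥ* A⁻¹ := by
    rw [star_mulVec, hA.inv.isHermitian.eq]
  have h := hA.posSemidef.inner_mul_inner_self_le e (A⁻¹ *ᵥ e)
  simpa only [hinv, ← dotProduct_mulVec, mulVec_mulVec, A.mul_nonsing_inv hdet,
    A.nonsing_inv_mul hdet, Matrix.mul_one, hdiag, one_apply_eq, norm_one, one_mul] using h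

theorem PosDef.inv_diag_le_diag_inv (hA : A.PosDef) (i : n) : (A i i)⁻¹ ≤ A⁻¹ i i := by
  rw [← hA.isHermitian.coe_re_apply_self, ← hA.inv.isHermitian.coe_re_apply_self,
    ← RCLike.ofReal_inv, RCLike.ofReal_le_ofReal,
    inv_le_iff_one_le_mul₀' (RCLike.pos_iff.mp hA.diag_pos).1]
  exact hA.one_le_re_diag_mul_re_inv_diag i

theorem PosDef.trace_inv_diagonal_diag_le_trace_inv (hA : A.PosDef) :
    (diagonal A.diag)⁻¹.trace ≤ A⁻¹.trace := by
  rw [inv_diagonal_of_ne_zero (v := A.diag) fun _ => hA.diag_pos.ne', trace_diagonal, trace]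
  exact Finset.sum_le_sum fun i _ => hA.inv_diag_le_diag_inv i

end Matrix

/-- For any `K`-dimensional positive definite Hermitian complex matrix `O`, letting `O₁` be the
diagonal matrix consisting of the diagonal entries of `O`, the trace of `O₁⁻¹` is at most the
trace of `O⁻¹` (both traces are real numbers). -/
theorem trace_inv_diagonal_le_trace_inv {K : ℕ} (O : Matrix (Fin K) (Fin K) ℂ)
    (hO : O.PosDef) :
    ((Matrix.diagonal (fun k => O k k))⁻¹).trace.re ≤ (O⁻¹).trace.re :=
  (Complex.le_def.mp hO.trace_inv_diagonal_diag_le_trace_inv).1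
end

section
/- For any K-dimensional positive definite Hermitian complex matrix N, letting N₁ be the diagonal matrix of its diagonal entries, one has log det(I + N) − log det(N) ≥ log det(I + N₁) − log det(N₁). -/
open Matrix
open scoped ComplexOrder

/-!
Clearing logarithms, the claim is `det N · ∏ (1 + N k k) ≤ det (1 + N) · ∏ N k k`, which we prove
by induction on the size, bordering a positive definite `D` by a column `b` and a corner `c`.
Schur complements give `det N = det D · (c - s)` and `det (1 + N) = det (1 + D) · (1 + c - t)` with
`s = b* D⁻¹ b` and `t = b* (1 + D)⁻¹ b`. Since `D⁻¹ - (1 + D)⁻¹ = (D + D²)⁻¹` is positive definite,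
`t ≤ s`, and then the new factors satisfy `(c - s)(1 + c) ≤ (1 + c - t) c`.
-/

theorem sub_mul_one_add_le {R : Type*} [CommRing R] [PartialOrder R] [IsOrderedRing R]
    {a s t : R} (ha : 0 ≤ a) (hs : 0 ≤ s) (hts : t ≤ s) :
    (a - s) * (1 + a) ≤ (1 + a - t) * a := by
  rw [← sub_nonneg, show (1 + a - t) * a - (a - s) * (1 + a) = s + a * (s - t) by ring]
  exact add_nonneg hs (mul_nonneg ha (sub_nonneg.mpr hts))

theorem Complex.log_re_sub_log_re_le_of_mul_le {x y p q : ℂ} (hx : 0 < x) (hy : 0 < y)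
    (hp : 0 < p) (hq : 0 < q) (h : x * q ≤ y * p) :
    Real.log q.re - Real.log p.re ≤ Real.log y.re - Real.log x.re := by
  obtain ⟨x, hx₀, rfl⟩ := RCLike.pos_iff_exists_ofReal.mp hx
  obtain ⟨y, hy₀, rfl⟩ := RCLike.pos_iff_exists_ofReal.mp hy
  obtain ⟨p, hp₀, rfl⟩ := RCLike.pos_iff_exists_ofReal.mp hp
  obtain ⟨q, hq₀, rfl⟩ := RCLike.pos_iff_exists_ofReal.mp hq
  have hlog := Real.log_le_log (by positivity) (show x * q ≤ y * p by exact_mod_cast h)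
  rw [Real.log_mul hx₀.ne' hq₀.ne', Real.log_mul hy₀.ne' hp₀.ne'] at hlog
  simp only [Complex.coe_algebraMap, Complex.ofReal_re]
  linarith

namespace Matrix

theorem det_fromBlocks_fin_one {α m : Type*} [CommRing α] [Fintype m] [DecidableEq m]
    (A : Matrix m m α) (B : Matrix m (Fin 1) α) (C : Matrix (Fin 1) m α)
    (d : Matrix (Fin 1) (Fin 1) α) [Invertible A] :
    (fromBlocks A B C d).det = A.det * (d 0 0 - (C * A⁻¹ * B) 0 0) := by
  rw [det_fromBlocks₁₁, det_fin_one, invOf_eq_nonsing_inv, sub_apply]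

theorem PosSemidef.posDef_one_add {𝕜 m : Type*} [RCLike 𝕜] [DecidableEq m] {D : Matrix m m 𝕜}
    (hD : D.PosSemidef) : (1 + D).PosDef :=
  PosDef.one.add_posSemidef hD

variable {𝕜 m : Type*} [RCLike 𝕜] [Fintype m] [DecidableEq m]

theorem PosDef.posDef_inv_sub_inv_one_add {D : Matrix m m 𝕜} (hD : D.PosDef) :
    (D⁻¹ - (1 + D)⁻¹).PosDef := by
  have hD_det := (isUnit_iff_isUnit_det D).mp hD.isUnit
  have hD₁_det := (isUnit_iff_isUnit_det _).mp hD.posSemidef.posDef_one_add.isUnit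
  have h_eq : D⁻¹ - (1 + D)⁻¹ = (D * (1 + D))⁻¹ := by
    rw [Matrix.mul_inv_rev]
    calc D⁻¹ - (1 + D)⁻¹ = (1 + D)⁻¹ * ((1 + D) * D⁻¹) - (1 + D)⁻¹ := by
          rw [← Matrix.mul_assoc, nonsing_inv_mul _ hD₁_det, Matrix.one_mul]
      _ = (1 + D)⁻¹ * D⁻¹ := by
          rw [add_mul, Matrix.one_mul, mul_nonsing_inv _ hD_det, Matrix.mul_add, Matrix.mul_one,
            add_sub_cancel_right]
  rw [h_eq, Matrix.mul_add, Matrix.mul_one]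
  refine PosDef.inv (hD.add_posSemidef ?_)
  simpa [hD.1.eq] using posSemidef_conjTranspose_mul_self D

theorem PosDef.det_mul_prod_one_add_diag_le_of_toBlocks₁₁
    {P : Matrix (m ⊕ Fin 1) (m ⊕ Fin 1) 𝕜} (hP : P.PosDef)
    (ih : P.toBlocks₁₁.det * ∏ i, (1 + P.toBlocks₁₁ i i) ≤
      (1 + P.toBlocks₁₁).det * ∏ i, P.toBlocks₁₁ i i) :
    P.det * ∏ i, (1 + P i i) ≤ (1 + P).det * ∏ i, P i i := by
  set D := P.toBlocks₁₁
  set b := P.toBlocks₁₂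
  set c := P.toBlocks₂₂
  have hP_eq : P = fromBlocks D b bᴴ c := by
    have hb : bᴴ = P.toBlocks₂₁ :=
      (isHermitian_fromBlocks_iff.mp ((fromBlocks_toBlocks P).symm ▸ hP.1)).2.1
    rw [hb, fromBlocks_toBlocks]
  have hD : D.PosDef := hP.submatrix Sum.inl_injective
  have hD₁ : (1 + D).PosDef := hD.posSemidef.posDef_one_add
  let := hD.isUnit.invertible
  let := hD₁.isUnit.invertible
  set s := (bᴴ * D⁻¹ * b) 0 0
  set t := (bᴴ * (1 + D)⁻¹ * b) 0 0
  have hc : 0 ≤ c 0 0 := (hP.diag_pos (i := Sum.inr 0)).le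
  have hs : 0 ≤ s := (hD.inv.posSemidef.conjTranspose_mul_mul_same b).diag_nonneg
  have hts : t ≤ s := by
    have := (hD.posDef_inv_sub_inv_one_add.posSemidef.conjTranspose_mul_mul_same b).diag_nonneg
      (i := 0)
    rwa [Matrix.mul_sub, Matrix.sub_mul, sub_apply, sub_nonneg] at this
  have hsc : 0 ≤ c 0 0 - s := by
    have := ((PosDef.fromBlocks₁₁ b c hD).mp (hP_eq ▸ hP.posSemidef)).diag_nonneg (i := 0)
    rwa [sub_apply] at this
  have hdet : P.det = D.det * (c 0 0 - s) := by
    rw [hP_eq, det_fromBlocks_fin_one]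
  have hdet₁ : (1 + P).det = (1 + D).det * (1 + c 0 0 - t) := by
    rw [hP_eq, ← fromBlocks_one, fromBlocks_add, zero_add, zero_add, det_fromBlocks_fin_one,
      add_apply, one_apply_eq]
  have hdiag : ∏ i, P i i = (∏ i, D i i) * c 0 0 := by
    rw [Fintype.prod_sum_type, Fin.prod_univ_one]; rfl
  have hdiag₁ : ∏ i, (1 + P i i) = (∏ i, (1 + D i i)) * (1 + c 0 0) := by
    rw [Fintype.prod_sum_type, Fin.prod_univ_one]; rfl
  rw [hdet, hdet₁, hdiag, hdiag₁]
  calc _ = (D.det * ∏ i, (1 + D i i)) * ((c 0 0 - s) * (1 + c 0 0)) := by ring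
    _ ≤ ((1 + D).det * ∏ i, D i i) * ((1 + c 0 0 - t) * c 0 0) :=
        mul_le_mul ih (sub_mul_one_add_le hc hs hts) (mul_nonneg hsc (add_nonneg zero_le_one hc))
          (mul_nonneg hD₁.det_pos.le (Finset.prod_nonneg fun _ _ ↦ hD.diag_pos.le))
    _ = _ := by ring

theorem det_mul_prod_one_add_diag_le_submatrix_iff {n : Type*} [Fintype n] [DecidableEq n]
    (N : Matrix n n 𝕜) (e : m ≃ n) :
    (N.submatrix e e).det * ∏ i, (1 + N.submatrix e e i i) ≤
        (1 + N.submatrix e e).det * ∏ i, N.submatrix e e i i ↔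
      N.det * ∏ i, (1 + N i i) ≤ (1 + N).det * ∏ i, N i i := by
  have h_one_add : 1 + N.submatrix e e = (1 + N).submatrix e e := by
    rw [submatrix_add, Pi.add_apply, Pi.add_apply, submatrix_one_equiv]
  rw [h_one_add, det_submatrix_equiv_self, det_submatrix_equiv_self]
  simp only [submatrix_apply]
  rw [e.prod_comp (fun i ↦ 1 + N i i), e.prod_comp (fun i ↦ N i i)]

theorem PosDef.det_mul_prod_one_add_diag_le {N : Matrix m m 𝕜} (hN : N.PosDef) :
    N.det * ∏ i, (1 + N i i) ≤ (1 + N).det * ∏ i, N i i := by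
  suffices h : ∀ (k : ℕ) (M : Matrix (Fin k) (Fin k) 𝕜), M.PosDef →
      M.det * ∏ i, (1 + M i i) ≤ (1 + M).det * ∏ i, M i i by
    rw [← det_mul_prod_one_add_diag_le_submatrix_iff N (Fintype.equivFin m).symm]
    exact h _ _ (hN.submatrix (Fintype.equivFin m).symm.injective)
  intro k
  induction k with
  | zero => intro M _; simp
  | succ k ih =>
    intro M hM
    rw [← det_mul_prod_one_add_diag_le_submatrix_iff M finSumFinEquiv]
    have hP := hM.submatrix finSumFinEquiv.injective
    exact hP.det_mul_prod_one_add_diag_le_of_toBlocks₁₁ (ih _ (hP.submatrix Sum.inl_injective))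

end Matrix

/-- For any `K`-dimensional positive definite Hermitian complex matrix `N`, letting `N₁` be the
diagonal matrix of its diagonal entries,
`log det(I + N) − log det(N) ≥ log det(I + N₁) − log det(N₁)`. -/
theorem logdet_ratio_ge_diagonal {K : ℕ} (N : Matrix (Fin K) (Fin K) ℂ)
    (hN : N.PosDef) :
    Real.log ((1 + Matrix.diagonal (fun k => N k k)).det).re -
      Real.log ((Matrix.diagonal (fun k => N k k)).det).re ≤
    Real.log ((1 + N).det).re - Real.log (N.det).re := by
  rw [det_diagonal, ← diagonal_one, diagonal_add, det_diagonal]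
  exact Complex.log_re_sub_log_re_le_of_mul_le hN.det_pos hN.posSemidef.posDef_one_add.det_pos
    (Finset.prod_pos fun _ _ ↦ hN.diag_pos) (Finset.prod_pos fun _ _ ↦ add_pos one_pos hN.diag_pos)
    hN.det_mul_prod_one_add_diag_le
end

section
/- The function g₁(x) = log det(xI + N₁) − log det(xI + N) is monotonically nonincreasing in x for x ≥ 0, where N is a K-dimensional positive definite Hermitian matrix and N₁ is its diagonal part. -/
open Matrix
open scoped ComplexOrder

/-!
Write `λᵢ` for the eigenvalues of `N` and `dₖ = Nₖₖ`. Then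
`g₁(x) = ∑ₖ log (x + dₖ) - ∑ᵢ log (x + λᵢ)`, whose derivative is
`∑ₖ (x + dₖ)⁻¹ - tr (xI + N)⁻¹`. For any positive definite `M` one has `(Mₖₖ)⁻¹ ≤ (M⁻¹)ₖₖ`
(Cauchy–Schwarz for the inner product given by `M`); applied to `M = xI + N` and summed over `k`
this makes the derivative nonpositive.
-/

lemma Matrix.det_smul_one_add_diagonal {n R : Type*} [Fintype n] [DecidableEq n] [CommRing R]
    (x : R) (d : n → R) : (x • (1 : Matrix n n R) + diagonal d).det = ∏ k, (x + d k) := by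
  rw [← diagonal_one, ← diagonal_smul, diagonal_add, det_diagonal]
  simp

namespace Matrix.PosDef

variable {𝕜 n : Type*} [RCLike 𝕜] [Fintype n] [DecidableEq n]

/- With `c = (M⁻¹)ₖₖ` and `W = 1 - c⁻¹ M⁻¹`, the `(k, k)` entry of the positive semidefinite
matrix `Wᴴ M W = M - 2c⁻¹ + c⁻² M⁻¹` is `Mₖₖ - c⁻¹`. -/
lemma inv_re_le_re_inv_apply {M : Matrix n n 𝕜} (hM : M.PosDef) (k : n) :
    (RCLike.re (M k k))⁻¹ ≤ RCLike.re (M⁻¹ k k) := by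
  set c := RCLike.re (M⁻¹ k k)
  have hc : 0 < c := (RCLike.pos_iff.mp hM.inv.diag_pos).1
  have hdet : IsUnit M.det := (isUnit_iff_isUnit_det M).mp hM.isUnit
  set W : Matrix n n 𝕜 := 1 - ((c⁻¹ : ℝ) : 𝕜) • M⁻¹
  have hW : Wᴴ = W := by
    simp [W, conjTranspose_sub, conjTranspose_smul, hM.inv.1.eq]
  have hWMW : Wᴴ * M * W = M - ((2 * c⁻¹ : ℝ) : 𝕜) • 1 + ((c⁻¹ * c⁻¹ : ℝ) : 𝕜) • M⁻¹ := by
    rw [hW]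
    simp only [W, sub_mul, mul_sub, one_mul, mul_one, smul_mul_assoc, mul_smul_comm,
      mul_nonsing_inv M hdet, nonsing_inv_mul M hdet]
    push_cast
    module
  have hnonneg : 0 ≤ RCLike.re ((Wᴴ * M * W) k k) :=
    (RCLike.nonneg_iff.mp (hM.posSemidef.conjTranspose_mul_mul_same W).diag_nonneg).1
  have hcc : c⁻¹ * c⁻¹ * c = c⁻¹ := by field_simp
  rw [hWMW] at hnonneg
  simp only [add_apply, sub_apply, smul_apply, smul_eq_mul, one_apply_eq, mul_one, map_add,
    map_sub, RCLike.re_ofReal_mul, RCLike.ofReal_re] at hnonneg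
  change 0 ≤ _ - _ + c⁻¹ * c⁻¹ * c at hnonneg
  rw [hcc] at hnonneg
  exact inv_le_of_inv_le₀ hc (by linarith)

end Matrix.PosDef

namespace Matrix.IsHermitian

variable {𝕜 n : Type*} [RCLike 𝕜] [Fintype n] [DecidableEq n] {A : Matrix n n 𝕜}

lemma det_cfc (hA : A.IsHermitian) (f : ℝ → ℝ) :
    (cfc f A).det = ∏ i, (f (hA.eigenvalues i) : 𝕜) := by
  rw [cfc_eq hA, IsHermitian.cfc, Unitary.conjStarAlgAut_apply, det_mul, det_mul,
    mul_right_comm, ← det_mul, Unitary.mul_star_self_of_mem hA.eigenvectorUnitary.2, det_one,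
    one_mul, det_diagonal]
  rfl

lemma trace_cfc (hA : A.IsHermitian) (f : ℝ → ℝ) :
    (cfc f A).trace = ∑ i, (f (hA.eigenvalues i) : 𝕜) := by
  rw [cfc_eq hA, IsHermitian.cfc, Unitary.conjStarAlgAut_apply, trace_mul_cycle,
    Unitary.coe_star_mul_self, one_mul, trace_diagonal]
  rfl

lemma cfc_const_add_id (hA : A.IsHermitian) (x : ℝ) :
    cfc (fun t => x + t) A = (x : 𝕜) • 1 + A := by
  rw [cfc_const_add x (fun t => t) A, cfc_id' ℝ A, Algebra.algebraMap_eq_smul_one,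
    RCLike.real_smul_eq_coe_smul (K := 𝕜)]

lemma re_det_smul_one_add (hA : A.IsHermitian) (x : ℝ) :
    RCLike.re ((x : 𝕜) • 1 + A).det = ∏ i, (x + hA.eigenvalues i) := by
  rw [← hA.cfc_const_add_id, hA.det_cfc, ← RCLike.ofReal_prod, RCLike.ofReal_re]

lemma re_det_smul_one_add_diagonal (hA : A.IsHermitian) (x : ℝ) :
    RCLike.re ((x : 𝕜) • 1 + diagonal fun k => A k k).det = ∏ k, (x + RCLike.re (A k k)) := by
  have hentry (k : n) : (x : 𝕜) + A k k = ((x + RCLike.re (A k k) : ℝ) : 𝕜) := by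
    rw [RCLike.ofReal_add, hA.coe_re_apply_self]
  simp_rw [det_smul_one_add_diagonal, hentry]
  rw [← RCLike.ofReal_prod, RCLike.ofReal_re]

lemma trace_inv_smul_one_add (hA : A.IsHermitian) {x : ℝ} (hx : ∀ i, x + hA.eigenvalues i ≠ 0) :
    ((x : 𝕜) • 1 + A)⁻¹.trace = ∑ i, (((x + hA.eigenvalues i)⁻¹ : ℝ) : 𝕜) := by
  rw [← hA.cfc_const_add_id, nonsing_inv_eq_ringInverse, ← cfc_inv (fun t => x + t) A,
    hA.trace_cfc]
  rw [hA.spectrum_real_eq_range_eigenvalues]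
  rintro _ ⟨i, rfl⟩
  exact hx i

end Matrix.IsHermitian

lemma Matrix.PosDef.sum_inv_add_re_diag_le {𝕜 n : Type*} [RCLike 𝕜] [Fintype n] [DecidableEq n]
    {N : Matrix n n 𝕜} (hN : N.PosDef) {x : ℝ} (hx : 0 ≤ x) :
    ∑ k, (x + RCLike.re (N k k))⁻¹ ≤ ∑ i, (x + hN.1.eigenvalues i)⁻¹ := by
  set M : Matrix n n 𝕜 := (x : 𝕜) • 1 + N
  have hM : M.PosDef :=
    PosDef.posSemidef_add (PosSemidef.one.smul (RCLike.ofReal_nonneg.mpr hx)) hN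
  have hMkk (k : n) : RCLike.re (M k k) = x + RCLike.re (N k k) := by
    simp only [M, add_apply, smul_apply, one_apply_eq, smul_eq_mul, mul_one, map_add,
      RCLike.ofReal_re]
  have hx_add (i : n) : x + hN.1.eigenvalues i ≠ 0 :=
    (add_pos_of_nonneg_of_pos hx (hN.eigenvalues_pos i)).ne'
  calc ∑ k, (x + RCLike.re (N k k))⁻¹ = ∑ k, (RCLike.re (M k k))⁻¹ := by simp only [hMkk]
    _ ≤ ∑ k, RCLike.re (M⁻¹ k k) := Finset.sum_le_sum fun k _ => hM.inv_re_le_re_inv_apply k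
    _ = RCLike.re M⁻¹.trace := by rw [trace, map_sum]; rfl
    _ = ∑ i, (x + hN.1.eigenvalues i)⁻¹ := by
      rw [hN.1.trace_inv_smul_one_add hx_add, map_sum]
      simp only [RCLike.ofReal_re]

lemma hasDerivAt_sum_log_add {ι : Type*} [Fintype ι] {a : ι → ℝ} {x : ℝ}
    (h : ∀ i, 0 < x + a i) :
    HasDerivAt (fun y => ∑ i, Real.log (y + a i)) (∑ i, (x + a i)⁻¹) x := by
  refine HasDerivAt.fun_sum fun i _ => ?_
  simpa using ((hasDerivAt_id x).add_const (a i)).log (h i).ne'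

lemma antitoneOn_sum_log_add_sub_sum_log_add {ι κ : Type*} [Fintype ι] [Fintype κ]
    {a : ι → ℝ} {b : κ → ℝ} (ha : ∀ i, 0 < a i) (hb : ∀ j, 0 < b j)
    (hab : ∀ x, 0 < x → ∑ i, (x + a i)⁻¹ ≤ ∑ j, (x + b j)⁻¹) :
    AntitoneOn (fun x => ∑ i, Real.log (x + a i) - ∑ j, Real.log (x + b j)) (Set.Ici 0) := by
  have hderiv (x : ℝ) (hx : 0 ≤ x) : HasDerivAt
      (fun x => ∑ i, Real.log (x + a i) - ∑ j, Real.log (x + b j))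
      (∑ i, (x + a i)⁻¹ - ∑ j, (x + b j)⁻¹) x :=
    (hasDerivAt_sum_log_add fun i => add_pos_of_nonneg_of_pos hx (ha i)).sub
      (hasDerivAt_sum_log_add fun j => add_pos_of_nonneg_of_pos hx (hb j))
  refine antitoneOn_of_hasDerivWithinAt_nonpos
    (f' := fun x => ∑ i, (x + a i)⁻¹ - ∑ j, (x + b j)⁻¹) (convex_Ici 0)
    (fun x hx => (hderiv x hx).continuousAt.continuousWithinAt) (fun x hx => ?_) (fun x hx => ?_)
  all_goals rw [interior_Ici] at hx
  · exact (hderiv x hx.le).hasDerivWithinAt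
  · exact sub_nonpos.mpr (hab x hx)

/-- The function `g₁(x) = log det(x I + N₁) − log det(x I + N)` is monotonically nonincreasing
in `x` for `x ≥ 0`, where `N` is a positive definite Hermitian complex matrix and `N₁` is its
diagonal part. -/
theorem g1_antitoneOn {K : ℕ} (N : Matrix (Fin K) (Fin K) ℂ) (hN : N.PosDef) :
    AntitoneOn (fun x : ℝ =>
      Real.log (((x : ℂ) • (1 : Matrix (Fin K) (Fin K) ℂ) +
          Matrix.diagonal (fun k => N k k)).det).re -
      Real.log (((x : ℂ) • (1 : Matrix (Fin K) (Fin K) ℂ) + N).det).re)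
      (Set.Ici (0 : ℝ)) := by
  have hdiag (k : Fin K) : 0 < (N k k).re := (RCLike.pos_iff.mp hN.diag_pos).1
  refine (antitoneOn_sum_log_add_sub_sum_log_add hdiag hN.eigenvalues_pos
    fun x hx => hN.sum_inv_add_re_diag_le hx.le).congr fun x (hx : 0 ≤ x) => ?_
  have hdet_diag : ((x : ℂ) • 1 + diagonal fun k => N k k).det.re = ∏ k, (x + (N k k).re) :=
    hN.1.re_det_smul_one_add_diagonal x
  have hdet : ((x : ℂ) • 1 + N).det.re = ∏ i, (x + hN.1.eigenvalues i) :=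
    hN.1.re_det_smul_one_add x
  dsimp only
  rw [hdet_diag, hdet, Real.log_prod fun k _ => (add_pos_of_nonneg_of_pos hx (hdiag k)).ne',
    Real.log_prod fun i _ => (add_pos_of_nonneg_of_pos hx (hN.eigenvalues_pos i)).ne']
end

section
/- Water-filling optimality for two points: for ρ₁ ≥ ρ₂ > 0 and budget constraint c₁ + c₂ = C with c₁, c₂ ≥ 0, the maximizer of Σ_j [log(1+ρ_j) − log(1+ρ_j 2^{−c_j})] satisfies c_j = max(log(ρ_j/ν), 0) for some common water level ν > 0 chosen so that the budget constraint holds. -/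
private lemma wf_log_aux (ρ₁ ρ₂ C b₁ b₂ : ℝ) (h₁ : 0 < ρ₁) (h₂ : 0 < ρ₂)
    (hb₁ : 0 < b₁) (hb₂ : 0 < b₂)
    (hkey : ∀ x z : ℝ, 0 < x → 0 < z → x ≤ 1 → (2:ℝ)^(-C) ≤ x → x * z = (2:ℝ)^(-C) →
      (1+ρ₁*b₁)*(1+ρ₂*b₂) ≤ (1+ρ₁*x)*(1+ρ₂*z)) :
    ∀ d₁ d₂ : ℝ, 0 ≤ d₁ → 0 ≤ d₂ → d₁ + d₂ = C →
      Real.logb 2 (1+ρ₁*b₁) + Real.logb 2 (1+ρ₂*b₂) ≤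
      Real.logb 2 (1+ρ₁*(2:ℝ)^(-d₁)) + Real.logb 2 (1+ρ₂*(2:ℝ)^(-d₂)) := by
  intro d₁ d₂ hd₁ hd₂ hsum
  set x : ℝ := (2:ℝ)^(-d₁) with hxdef
  set z : ℝ := (2:ℝ)^(-d₂) with hzdef
  have hx0 : 0 < x := Real.rpow_pos_of_pos two_pos _
  have hz0 : 0 < z := Real.rpow_pos_of_pos two_pos _
  have hx1 : x ≤ 1 := Real.rpow_le_one_of_one_le_of_nonpos one_le_two (by linarith)
  have hxK : (2:ℝ)^(-C) ≤ x :=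
    Real.rpow_le_rpow_of_exponent_le one_le_two (by linarith)
  have hxz : x * z = (2:ℝ)^(-C) := by
    rw [hxdef, hzdef, ← Real.rpow_add two_pos]
    congr 1; linarith
  have hp := hkey x z hx0 hz0 hx1 hxK hxz
  have hA : (0:ℝ) < 1 + ρ₁*b₁ := by positivity
  have hB : (0:ℝ) < 1 + ρ₂*b₂ := by positivity
  have hA' : (0:ℝ) < 1 + ρ₁*x := by positivity
  have hB' : (0:ℝ) < 1 + ρ₂*z := by positivity
  have := (Real.logb_le_logb one_lt_two (mul_pos hA hB) (mul_pos hA' hB')).2 hp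
  rwa [Real.logb_mul hA.ne' hB.ne', Real.logb_mul hA'.ne' hB'.ne'] at this

/-- Water-filling optimality for two sub-channels: for `ρ₁ ≥ ρ₂ > 0` and a total budget `C > 0`,
there is a water level `ν > 0` such that the allocations `c_j = max (log₂(ρ_j/ν)) 0` satisfy the
budget constraint `c₁ + c₂ = C` and maximize
`Σ_j [log₂(1+ρ_j) − log₂(1+ρ_j 2^{−c_j})]` over all nonnegative allocations meeting the budget. -/
theorem water_filling_two_points (ρ₁ ρ₂ C : ℝ) (h₂ : 0 < ρ₂) (h₁₂ : ρ₂ ≤ ρ₁) (hC : 0 < C) :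
    ∃ ν : ℝ, 0 < ν ∧
      max (Real.logb 2 (ρ₁ / ν)) 0 + max (Real.logb 2 (ρ₂ / ν)) 0 = C ∧
      ∀ d₁ d₂ : ℝ, 0 ≤ d₁ → 0 ≤ d₂ → d₁ + d₂ = C →
        (Real.logb 2 (1 + ρ₁) - Real.logb 2 (1 + ρ₁ * 2 ^ (-d₁))) +
          (Real.logb 2 (1 + ρ₂) - Real.logb 2 (1 + ρ₂ * 2 ^ (-d₂))) ≤
        (Real.logb 2 (1 + ρ₁) -
            Real.logb 2 (1 + ρ₁ * 2 ^ (-(max (Real.logb 2 (ρ₁ / ν)) 0)))) +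
          (Real.logb 2 (1 + ρ₂) -
            Real.logb 2 (1 + ρ₂ * 2 ^ (-(max (Real.logb 2 (ρ₂ / ν)) 0)))) := by
  have h₁ : 0 < ρ₁ := lt_of_lt_of_le h₂ h₁₂
  have hK0 : (0:ℝ) < (2:ℝ)^(-C) := Real.rpow_pos_of_pos two_pos _
  have hKC : (2:ℝ)^(-C) * (2:ℝ)^C = 1 := by
    rw [← Real.rpow_add two_pos]; simp
  by_cases hcase : ρ₂ ≤ ρ₁ * (2:ℝ)^(-C)
  · -- one active channel: ν = ρ₁ * 2^(-C)
    have hν0 : (0:ℝ) < ρ₁ * (2:ℝ)^(-C) := mul_pos h₁ hK0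
    have e1 : ρ₁ / (ρ₁ * (2:ℝ)^(-C)) = (2:ℝ)^C := by
      rw [div_eq_iff hν0.ne']; linear_combination (-ρ₁) * hKC
    have m1 : max (Real.logb 2 (ρ₁ / (ρ₁ * (2:ℝ)^(-C)))) 0 = C := by
      rw [e1, Real.logb_rpow two_pos (by norm_num)]
      exact max_eq_left hC.le
    have m2 : max (Real.logb 2 (ρ₂ / (ρ₁ * (2:ℝ)^(-C)))) 0 = 0 := by
      refine max_eq_right (Real.logb_nonpos one_lt_two (by positivity) ?_)
      rw [div_le_one hν0]; exact hcase
    refine ⟨ρ₁ * (2:ℝ)^(-C), hν0, ?_, ?_⟩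
    · rw [m1, m2]; ring
    · intro d₁ d₂ hd₁ hd₂ hsum
      rw [m1, m2, neg_zero, Real.rpow_zero]
      have haux := wf_log_aux ρ₁ ρ₂ C ((2:ℝ)^(-C)) 1 h₁ h₂ hK0 one_pos ?_ d₁ d₂ hd₁ hd₂ hsum
      · linarith
      · intro x z hx0 hz0 hx1 hxK hxz
        have hz1 : z ≤ 1 := by nlinarith
        have hρx : ρ₂ ≤ ρ₁ * x := le_trans hcase (by nlinarith)
        rw [← hxz]
        nlinarith [mul_nonneg (sub_nonneg.2 hz1) (sub_nonneg.2 hρx)]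
  · -- both channels active: ν = sqrt (ρ₁*ρ₂*2^(-C))
    push_neg at hcase
    set ν : ℝ := Real.sqrt (ρ₁*ρ₂*(2:ℝ)^(-C)) with hνdef
    have hν0 : 0 < ν := Real.sqrt_pos.2 (by positivity)
    have hν2 : ν^2 = ρ₁*ρ₂*(2:ℝ)^(-C) := Real.sq_sqrt (by positivity)
    have hν₂ : ν ≤ ρ₂ := by
      have h' : ν ≤ Real.sqrt (ρ₂^2) := Real.sqrt_le_sqrt (by nlinarith)
      rwa [Real.sqrt_sq h₂.le] at h'
    have hν₁ : ν ≤ ρ₁ := le_trans hν₂ h₁₂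
    have m1 : max (Real.logb 2 (ρ₁ / ν)) 0 = Real.logb 2 (ρ₁ / ν) :=
      max_eq_left (Real.logb_nonneg one_lt_two ((one_le_div hν0).2 hν₁))
    have m2 : max (Real.logb 2 (ρ₂ / ν)) 0 = Real.logb 2 (ρ₂ / ν) :=
      max_eq_left (Real.logb_nonneg one_lt_two ((one_le_div hν0).2 hν₂))
    refine ⟨ν, hν0, ?_, ?_⟩
    · rw [m1, m2, ← Real.logb_mul (by positivity) (by positivity)]
      have e : ρ₁ / ν * (ρ₂ / ν) = (2:ℝ)^C := by
        rw [div_mul_div_comm, div_eq_iff (by positivity : (ν*ν : ℝ) ≠ 0)]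
        nlinarith [hν2, hKC]
      rw [e, Real.logb_rpow two_pos (by norm_num)]
    · intro d₁ d₂ hd₁ hd₂ hsum
      have r1 : (2:ℝ)^(-(max (Real.logb 2 (ρ₁ / ν)) 0)) = ν/ρ₁ := by
        rw [m1, Real.rpow_neg two_pos.le,
          Real.rpow_logb two_pos (by norm_num) (div_pos h₁ hν0), inv_div]
      have r2 : (2:ℝ)^(-(max (Real.logb 2 (ρ₂ / ν)) 0)) = ν/ρ₂ := by
        rw [m2, Real.rpow_neg two_pos.le,
          Real.rpow_logb two_pos (by norm_num) (div_pos h₂ hν0), inv_div]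
      rw [r1, r2]
      have haux := wf_log_aux ρ₁ ρ₂ C (ν/ρ₁) (ν/ρ₂) h₁ h₂ (by positivity) (by positivity)
        ?_ d₁ d₂ hd₁ hd₂ hsum
      · linarith
      · intro x z hx0 hz0 hx1 hxK hxz
        have e1 : ρ₁ * (ν/ρ₁) = ν := by field_simp
        have e2 : ρ₂ * (ν/ρ₂) = ν := by field_simp
        rw [e1, e2]
        have hνxz : ν^2 = ρ₁*ρ₂*(x*z) := by rw [hxz]; exact hν2
        have h2ν : 2*ν ≤ ρ₁*x + ρ₂*z := by
          nlinarith [sq_nonneg (ρ₁*x - ν), mul_pos h₁ hx0]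
        nlinarith [h2ν, hνxz]
end

section
/- Asymptotic tightness of the informed receiver bound: for fixed T ≥ 1, ρ > 0 and a probability density f on (0,∞), define ν = ν(C) > 0 by the constraint ∫_{ν/ρ}^∞ log(ρλ/ν) f(λ) dλ = C/T, and R(C) = T ∫_{ν/ρ}^∞ [log(1+ρλ) − log(1+ν)] f(λ) dλ. Then R(C) ≤ C, and as C → ∞, ν(C) → 0 and R(C) → T ∫₀^∞ log(1+ρλ) f(λ) dλ (assuming this integral is finite). -/
/-!
Since `(1 + ρx)/(1 + ν) ≤ ρx/ν` whenever `ν ≤ ρx`, the rate integrand is dominated by the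
constraint integrand, which gives `R(C) ≤ T · (C/T) = C`. The constraint integral is antitone in
`ν` and finite for every `ν > 0`, so its prescribed value `C/T → ∞` forces `ν(C) → 0`.
Finally `R(C) = T (∫_{ν/ρ}^∞ log(1+ρλ) f - log(1+ν) ∫_{ν/ρ}^∞ f)`, and as the cut-off `ν/ρ`
tends to `0` the two tail integrals converge by dominated convergence, while `log(1+ν) → 0`.
-/

open Filter MeasureTheory Set Real Topology

section LogRatio

variable {b ρ v : ℝ} {f : ℝ → ℝ}

lemma lt_mul_of_mem_Ioi_div (hρ : 0 < ρ) {x : ℝ} (hx : x ∈ Ioi (v / ρ)) : v < ρ * x :=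
  (div_lt_iff₀' hρ).1 hx

lemma logb_one_add_sub_logb_one_add_le_logb_div (hb : 1 < b) {y : ℝ} (hv : 0 < v)
    (hvy : v ≤ y) : logb b (1 + y) - logb b (1 + v) ≤ logb b (y / v) := by
  have hy : 0 < y := hv.trans_le hvy
  rw [← logb_div (by positivity) (by positivity), logb_le_logb hb (by positivity) (by positivity),
    div_le_div_iff₀ (by positivity) hv]
  nlinarith

lemma integrableOn_logb_div_mul (hb : 1 < b) (hρ : 0 < ρ) (hv : 0 < v) (hf0 : ∀ x, 0 ≤ f x)
    (hf : IntegrableOn f (Ioi 0))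
    (hlog : IntegrableOn (fun x => logb b (1 + ρ * x) * f x) (Ioi 0)) :
    IntegrableOn (fun x => logb b (ρ * x / v) * f x) (Ioi (v / ρ)) := by
  have hsub : Ioi (v / ρ) ⊆ Ioi 0 := Ioi_subset_Ioi (by positivity)
  refine Integrable.mono' ((hlog.sub (hf.const_mul (logb b v))).mono_set hsub) ?_ ?_
  · exact ((by fun_prop : Measurable fun x => log (ρ * x / v)).div_const (log b)
      ).aestronglyMeasurable.mul (hf.mono_set hsub).aestronglyMeasurable
  · filter_upwards [ae_restrict_mem measurableSet_Ioi] with x hx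
    have hvx := lt_mul_of_mem_Ioi_div hρ hx
    have hx0 : 0 < ρ * x := hv.trans hvx
    simp only [Pi.sub_apply]
    rw [norm_mul, norm_of_nonneg (logb_nonneg hb ((one_le_div hv).2 hvx.le)),
      norm_of_nonneg (hf0 x), ← sub_mul, logb_div hx0.ne' hv.ne']
    gcongr
    · exact hf0 x
    · linarith

lemma setIntegral_logb_sub_mul_le (hb : 1 < b) (hρ : 0 < ρ) (hv : 0 < v) (hf0 : ∀ x, 0 ≤ f x)
    (hint : IntegrableOn (fun x => logb b (ρ * x / v) * f x) (Ioi (v / ρ))) :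
    ∫ x in Ioi (v / ρ), (logb b (1 + ρ * x) - logb b (1 + v)) * f x ≤
      ∫ x in Ioi (v / ρ), logb b (ρ * x / v) * f x := by
  refine integral_mono_of_nonneg ?_ hint ?_
  all_goals filter_upwards [ae_restrict_mem measurableSet_Ioi] with x hx
  all_goals have hvx := lt_mul_of_mem_Ioi_div hρ hx
  · exact mul_nonneg (sub_nonneg.2 (logb_le_logb_of_le hb (by positivity) (by linarith)))
      (hf0 x)
  · exact mul_le_mul_of_nonneg_right
      (logb_one_add_sub_logb_one_add_le_logb_div hb hv hvx.le) (hf0 x)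

lemma antitoneOn_setIntegral_logb_div_mul (hb : 1 < b) (hρ : 0 < ρ) (hf0 : ∀ x, 0 ≤ f x)
    (hf : IntegrableOn f (Ioi 0))
    (hlog : IntegrableOn (fun x => logb b (1 + ρ * x) * f x) (Ioi 0)) :
    AntitoneOn (fun v => ∫ x in Ioi (v / ρ), logb b (ρ * x / v) * f x) (Ioi 0) := by
  intro v (hv : 0 < v) w (hw : 0 < w) hvw
  have hint := integrableOn_logb_div_mul hb hρ hv hf0 hf hlog
  have hsub : Ioi (w / ρ) ⊆ Ioi (v / ρ) := Ioi_subset_Ioi (by gcongr)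
  calc ∫ x in Ioi (w / ρ), logb b (ρ * x / w) * f x
      ≤ ∫ x in Ioi (w / ρ), logb b (ρ * x / v) * f x := by
        refine integral_mono_of_nonneg ?_ (hint.mono_set hsub) ?_
        all_goals filter_upwards [ae_restrict_mem measurableSet_Ioi] with x hx
        all_goals have hwx := lt_mul_of_mem_Ioi_div hρ hx
        · exact mul_nonneg (logb_nonneg hb ((one_le_div hw).2 hwx.le)) (hf0 x)
        · exact mul_le_mul_of_nonneg_right
            (logb_le_logb_of_le hb (div_pos (hw.trans hwx) hw)
              (div_le_div_of_nonneg_left (hw.trans hwx).le hv hvw)) (hf0 x)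
    _ ≤ ∫ x in Ioi (v / ρ), logb b (ρ * x / v) * f x := by
        refine setIntegral_mono_set hint ?_ hsub.eventuallyLE
        filter_upwards [ae_restrict_mem measurableSet_Ioi] with x hx
        exact mul_nonneg (logb_nonneg hb ((one_le_div hv).2 (lt_mul_of_mem_Ioi_div hρ hx).le))
          (hf0 x)

end LogRatio

lemma tendsto_nhds_zero_of_antitoneOn_of_tendsto_atTop {α : Type*} {l : Filter α} {G : ℝ → ℝ}
    {ν : α → ℝ} (hG : AntitoneOn G (Ioi 0)) (hpos : ∀ᶠ c in l, 0 < ν c)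
    (htop : Tendsto (fun c => G (ν c)) l atTop) : Tendsto ν l (𝓝 0) := by
  refine tendsto_order.2 ⟨fun a ha => hpos.mono fun c hc => ha.trans hc, fun ε hε => ?_⟩
  filter_upwards [hpos, htop.eventually_gt_atTop (G ε)] with c hc hGc
  by_contra! hle
  exact hGc.not_ge (hG hε hc hle)

lemma tendsto_setIntegral_Ioi {α E : Type*} [NormedAddCommGroup E] [NormedSpace ℝ E]
    {l : Filter α} [l.IsCountablyGenerated] {g : ℝ → E} {a : α → ℝ} {a₀ : ℝ}
    (hg : IntegrableOn g (Ioi a₀)) (ha : Tendsto a l (𝓝 a₀)) (hle : ∀ᶠ c in l, a₀ ≤ a c) :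
    Tendsto (fun c => ∫ x in Ioi (a c), g x) l (𝓝 (∫ x in Ioi a₀, g x)) := by
  have hdct : Tendsto (fun c => ∫ x in Ioi a₀, (Ioi (a c)).indicator g x) l
      (𝓝 (∫ x in Ioi a₀, g x)) := by
    refine tendsto_integral_filter_of_dominated_convergence (fun x => ‖g x‖)
      (Eventually.of_forall fun c => hg.aestronglyMeasurable.indicator measurableSet_Ioi)
      (Eventually.of_forall fun c => Eventually.of_forall fun x => norm_indicator_le_norm_self g x)
      hg.norm ?_
    filter_upwards [ae_restrict_mem measurableSet_Ioi] with x (hx : a₀ < x)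
    refine tendsto_const_nhds.congr' ?_
    filter_upwards [(tendsto_order.1 ha).2 x hx] with c hc
    exact (indicator_of_mem hc g).symm
  refine hdct.congr' ?_
  filter_upwards [hle] with c hc
  rw [setIntegral_indicator measurableSet_Ioi, Ioi_inter_Ioi, max_eq_right hc]

lemma setIntegral_sub_const_mul {s : Set ℝ} {g f : ℝ → ℝ} (c : ℝ)
    (hgf : IntegrableOn (fun x => g x * f x) s) (hf : IntegrableOn f s) :
    ∫ x in s, (g x - c) * f x = (∫ x in s, g x * f x) - c * ∫ x in s, f x := by
  simp_rw [sub_mul]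
  rw [integral_sub hgf (hf.const_mul c), integral_const_mul]

/-- Asymptotic tightness of the informed receiver bound.  For fixed `T ≥ 1`, `ρ > 0` and a
probability density `f` on `(0,∞)` with `∫₀^∞ log₂(1+ρλ) f(λ) dλ < ∞`, let `ν(C) > 0` satisfy
the bottleneck constraint `∫_{ν(C)/ρ}^∞ log₂(ρλ/ν(C)) f(λ) dλ = C/T` for every `C > 0`, and let
`R(C) = T ∫_{ν(C)/ρ}^∞ [log₂(1+ρλ) − log₂(1+ν(C))] f(λ) dλ`.  Then `R(C) ≤ C` for all `C > 0`,
`ν(C) → 0` as `C → ∞`, and `R(C) → T ∫₀^∞ log₂(1+ρλ) f(λ) dλ` as `C → ∞`. -/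
theorem informed_receiver_bound_asymptotics
    (T ρ : ℝ) (hT : 1 ≤ T) (hρ : 0 < ρ)
    (f : ℝ → ℝ) (hf0 : ∀ x, 0 ≤ f x)
    (hf1 : ∫ x in Set.Ioi (0 : ℝ), f x = 1)
    (hfint : IntegrableOn (fun x => Real.logb 2 (1 + ρ * x) * f x) (Set.Ioi 0))
    (ν : ℝ → ℝ) (hν : ∀ C, 0 < C → 0 < ν C)
    (hcon : ∀ C, 0 < C →
      ∫ x in Set.Ioi (ν C / ρ), Real.logb 2 (ρ * x / ν C) * f x = C / T) :
    (∀ C, 0 < C →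
        T * ∫ x in Set.Ioi (ν C / ρ),
            (Real.logb 2 (1 + ρ * x) - Real.logb 2 (1 + ν C)) * f x ≤ C) ∧
    Tendsto ν atTop (nhds 0) ∧
    Tendsto (fun C =>
        T * ∫ x in Set.Ioi (ν C / ρ),
            (Real.logb 2 (1 + ρ * x) - Real.logb 2 (1 + ν C)) * f x)
      atTop (nhds (T * ∫ x in Set.Ioi (0 : ℝ), Real.logb 2 (1 + ρ * x) * f x)) := by
  have hT0 : 0 < T := one_pos.trans_le hT
  have hf : IntegrableOn f (Ioi 0) := Integrable.of_integral_ne_zero (by simp [hf1])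
  have hrate_le : ∀ C, 0 < C → T * ∫ x in Ioi (ν C / ρ),
      (logb 2 (1 + ρ * x) - logb 2 (1 + ν C)) * f x ≤ C := fun C hC => calc
    _ ≤ T * (C / T) := by
        rw [← hcon C hC]
        exact mul_le_mul_of_nonneg_left (setIntegral_logb_sub_mul_le one_lt_two hρ (hν C hC)
          hf0 (integrableOn_logb_div_mul one_lt_two hρ (hν C hC) hf0 hf hfint)) hT0.le
    _ = C := mul_div_cancel₀ C hT0.ne'
  have hν0 : Tendsto ν atTop (𝓝 0) := by
    refine tendsto_nhds_zero_of_antitoneOn_of_tendsto_atTop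
      (antitoneOn_setIntegral_logb_div_mul one_lt_two hρ hf0 hf hfint)
      ((eventually_gt_atTop 0).mono hν) ((tendsto_id.atTop_div_const hT0).congr' ?_)
    filter_upwards [eventually_gt_atTop 0] with C hC using (hcon C hC).symm
  have hcut : Tendsto (fun C => ν C / ρ) atTop (𝓝 0) := by simpa using hν0.div_const ρ
  have hcut_nonneg : ∀ᶠ C in atTop, 0 ≤ ν C / ρ := by
    filter_upwards [eventually_gt_atTop 0] with C hC using (div_pos (hν C hC) hρ).le
  have hlog : Tendsto (fun C => logb 2 (1 + ν C)) atTop (𝓝 0) := by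
    simpa [Function.comp_def] using (continuousAt_logb (b := 2) one_ne_zero).tendsto.comp
      (by simpa using hν0.const_add 1)
  have hlim := ((tendsto_setIntegral_Ioi hfint hcut hcut_nonneg).sub
    (hlog.mul (tendsto_setIntegral_Ioi hf hcut hcut_nonneg))).const_mul T
  rw [hf1, zero_mul, sub_zero] at hlim
  refine ⟨hrate_le, hν0, hlim.congr' ?_⟩
  filter_upwards [hcut_nonneg] with C hC
  rw [setIntegral_sub_const_mul _ (hfint.mono_set (Ioi_subset_Ioi hC))
    (hf.mono_set (Ioi_subset_Ioi hC))]
end
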